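/- arXiv:2310.14134 — 6 statements merged into one kernel-verified Lean document; each statement's English description precedes it below -/
import Mathlib

section
/- Suppose * : M_n(R) → M_n(R) defines an R*-algebra structure and there is an invertible matrix C ∈ M_n(R) such that A* = C⁻¹ A^T C for all A. Then there exists a ∈ R with C^T = aC and a² = 1. -/
/-!
Applying `A ↦ C⁻¹ Aᵀ C` twice gives `A ↦ D A D'` with `D = C⁻¹ Cᵀ` and `D' = (C⁻¹)ᵀ C`.
Since `*` is an involution, `D A D' = A` for every `A`, which forces `D` to be central,
hence a scalar `a`; so `Cᵀ = a C`. Transposing once more gives `C = a² C`, and `C` is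
invertible, so `a² = 1`.
-/

open Matrix

theorem mem_center_of_forall_mul_mul_eq {M : Type*} [Monoid M] {d e : M}
    (h : ∀ a, d * a * e = a) : d ∈ Set.center M := by
  have hde : d * e = 1 := by simpa using h 1
  have hed : e * d = 1 :=
    calc e * d = d * (e * d) * e := (h _).symm
      _ = d * e * (d * e) := by simp only [mul_assoc]
      _ = 1 := by rw [hde, one_mul]
  refine Semigroup.mem_center_iff.mpr fun a => ?_
  calc a * d = d * a * e * d := by rw [h]
    _ = d * a := by rw [mul_assoc, hed, mul_one]

namespace Matrix

variable {n R : Type*} [Fintype n] [DecidableEq n] [CommRing R]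

theorem invOf_mul_transpose_conj_transpose (C A : Matrix n n R) [Invertible C] :
    ⅟C * (⅟C * Aᵀ * C)ᵀ * C = ⅟C * Cᵀ * A * ((⅟C)ᵀ * C) := by
  simp only [transpose_mul, transpose_transpose, Matrix.mul_assoc]

theorem exists_transpose_eq_smul_of_involutive (C : Matrix n n R) [Invertible C]
    (h : ∀ A, ⅟C * (⅟C * Aᵀ * C)ᵀ * C = A) : ∃ a : R, Cᵀ = a • C := by
  obtain ⟨a, ha⟩ : ⅟C * Cᵀ ∈ Set.range (scalar n) :=
    center_eq_range (n := n) (R := R) ▸ mem_center_of_forall_mul_mul_eq fun A => by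
      rw [← invOf_mul_transpose_conj_transpose, h]
  refine ⟨a, ?_⟩
  calc Cᵀ = C * (⅟C * Cᵀ) := (mul_invOf_cancel_left C Cᵀ).symm
    _ = a • C := by rw [← ha, scalar_apply, smul_eq_mul_diagonal]

theorem sq_eq_one_of_transpose_eq_smul [Nonempty n] (C : Matrix n n R) [Invertible C] {a : R}
    (h : Cᵀ = a • C) : a ^ 2 = 1 := by
  have hC : (a ^ 2) • C = C := by
    rw [sq, ← smul_smul, ← h, ← transpose_smul, ← h, transpose_transpose]
  have h1 : (a ^ 2) • (1 : Matrix n n R) = 1 :=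
    calc (a ^ 2) • (1 : Matrix n n R) = ⅟C * ((a ^ 2) • C) := by
          rw [Matrix.mul_smul, invOf_mul_self]
      _ = 1 := by rw [hC, invOf_mul_self]
  obtain ⟨i⟩ := ‹Nonempty n›
  simpa using congr_fun₂ h1 i i

end Matrix

theorem stmt_5_general (R : Type*) [CommRing R] (n : ℕ)
    (st : Matrix (Fin n) (Fin n) R → Matrix (Fin n) (Fin n) R)
    (hinv : ∀ A, st (st A) = A)
    (C : Matrix (Fin n) (Fin n) R) [Invertible C]
    (hst : ∀ A, st A = ⅟C * Aᵀ * C) :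
    ∃ a : R, Cᵀ = a • C ∧ a ^ 2 = 1 := by
  rcases isEmpty_or_nonempty (Fin n) with _ | _
  · exact ⟨1, Subsingleton.elim _ _, one_pow 2⟩
  obtain ⟨a, ha⟩ := exists_transpose_eq_smul_of_involutive C fun A => by
    simpa only [hst] using hinv A
  exact ⟨a, ha, sq_eq_one_of_transpose_eq_smul C ha⟩

/-- If `st` is an `R*`-algebra structure on `M_n(R)` given by `A ↦ C⁻¹ Aᵀ C` for
some invertible `C`, then there is `a ∈ R` with `Cᵀ = a • C` and `a² = 1`. -/
theorem stmt_5 (R : Type*) [CommRing R] (n : ℕ)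
    (st : Matrix (Fin n) (Fin n) R → Matrix (Fin n) (Fin n) R)
    (hadd : ∀ A B, st (A + B) = st A + st B)
    (hsmul : ∀ (r : R) A, st (r • A) = r • st A)
    (hmul : ∀ A B, st (A * B) = st B * st A)
    (hone : st 1 = 1)
    (hinv : ∀ A, st (st A) = A)
    (C : Matrix (Fin n) (Fin n) R) [Invertible C]
    (hst : ∀ A, st A = ⅟C * Aᵀ * C) :
    ∃ a : R, Cᵀ = a • C ∧ a ^ 2 = 1 :=
  stmt_5_general R n st hinv C hst
end

section
/- With notation as above, for any x, y ∈ R^n, the element x ⊗ y − a·(y ⊗ x) is zero in (R^n)_* ⊗_{M_n(R)} R^n. -/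
open Matrix TensorProduct

/-- The submodule of relations cutting out `(Rⁿ)_* ⊗_{M_n(R)} Rⁿ` from
`Rⁿ ⊗_R Rⁿ`, where the right action is `x · A := (C⁻¹AᵀC).mulVec x` and the
left action is the standard one. -/
def matRel {R : Type*} [CommRing R] {n : ℕ}
    (C : Matrix (Fin n) (Fin n) R) [Invertible C] :
    Submodule R ((Fin n → R) ⊗[R] (Fin n → R)) :=
  Submodule.span R
    {z | ∃ (A : Matrix (Fin n) (Fin n) R) (x y : Fin n → R),
      z = ((⅟C * Aᵀ * C).mulVec x) ⊗ₜ[R] y - x ⊗ₜ[R] (A.mulVec y)}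

lemma vecMulVec_mulVec' {R : Type*} [CommRing R] {n : ℕ} (w v x : Fin n → R) :
    (vecMulVec w v).mulVec x = (v ⬝ᵥ x) • w := by
  ext i
  simp [mulVec, vecMulVec_apply, dotProduct, Finset.sum_mul, mul_assoc, mul_comm,
    mul_left_comm, Finset.mul_sum]

lemma transpose_vecMulVec' {R : Type*} [CommRing R] {n : ℕ} (w v : Fin n → R) :
    (vecMulVec w v)ᵀ = vecMulVec v w := by
  ext i j; simp [vecMulVec_apply, mul_comm, transpose_apply]

/-- For any `x, y ∈ Rⁿ`, the element `x ⊗ y − a • (y ⊗ x)` is zero in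
`(Rⁿ)_* ⊗_{M_n(R)} Rⁿ`. -/
theorem stmt_9 (R : Type*) [CommRing R] (n : ℕ)
    (C : Matrix (Fin n) (Fin n) R) [Invertible C] (a : R)
    (hC : Cᵀ = a • C) (ha : a ^ 2 = 1) :
    ∀ x y : Fin n → R,
      (Submodule.Quotient.mk (x ⊗ₜ[R] y - a • (y ⊗ₜ[R] x)) :
        ((Fin n → R) ⊗[R] (Fin n → R)) ⧸ matRel C) = 0 := by
  intro x y
  rw [Submodule.Quotient.mk_eq_zero]
  rcases Nat.eq_zero_or_pos n with h | h
  · subst h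
    rw [Subsingleton.elim x 0]
    simp only [zero_tmul, tmul_zero, smul_zero, sub_zero]
    exact zero_mem _
  · set i0 : Fin n := ⟨0, h⟩
    set w : Fin n → R := Pi.single i0 1 with hw
    set t : Fin n → R := (⅟C).mulVec w with ht
    set c : R := x ⬝ᵥ C.mulVec y with hc
    have key : ∀ p q : Fin n → R,
        (⅟C * (vecMulVec p w)ᵀ * C).mulVec q = (p ⬝ᵥ C.mulVec q) • t := by
      intro p q
      rw [transpose_vecMulVec']
      simp only [Matrix.mul_assoc, ← mulVec_mulVec]
      rw [vecMulVec_mulVec', mulVec_smul]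
    have hww : w ⬝ᵥ w = 1 := by
      simp [hw, dotProduct, Pi.single_apply]
    have hmem : ∀ p q : Fin n → R,
        ((p ⬝ᵥ C.mulVec q) • t) ⊗ₜ[R] w - q ⊗ₜ[R] p ∈ matRel C := by
      intro p q
      have hgen : ((⅟C * (vecMulVec p w)ᵀ * C).mulVec q) ⊗ₜ[R] w -
          q ⊗ₜ[R] ((vecMulVec p w).mulVec w) ∈ matRel C :=
        Submodule.subset_span ⟨vecMulVec p w, q, w, rfl⟩
      rwa [key p q, vecMulVec_mulVec', hww, one_smul] at hgen
    have hac : y ⬝ᵥ C.mulVec x = a * c := by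
      have h' : y ⬝ᵥ C.mulVec x = (Cᵀ.mulVec y) ⬝ᵥ x := by
        rw [dotProduct_mulVec, ← mulVec_transpose]
      rw [h', hC, smul_mulVec, smul_dotProduct, dotProduct_comm, smul_eq_mul]
    have h1 := hmem y x
    rw [hac] at h1
    have h2 := hmem x y
    rw [← hc] at h2
    rw [← TensorProduct.smul_tmul'] at h1 h2
    have hfin := sub_mem (Submodule.smul_mem _ a h2) h1
    convert hfin using 1
    module
end

section
/- Let E be a local ring (noncommutative, with Jacobson radical J(E) and division ring D = E/J(E)), M a finitely generated left E-module with x, y part of a minimal generating set of M, and M_* a right E-module structure on M such that the same elements are part of a minimal generating set for M_*. Then for any unit r of the base commutative local ring R mapping to a unit of E and any s ∈ R, the element r(x ⊗ y) − s(y ⊗ x) is nonzero in M_* ⊗_E M. -/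
open TensorProduct

namespace Stmt16Aux

section LocalRing

variable {E : Type*} [Ring E] [IsLocalRing E]

lemma unit_or_one_sub (a : E) : IsUnit a ∨ IsUnit (1 - a) :=
  IsLocalRing.isUnit_or_isUnit_of_add_one (a := a) (b := 1 - a) (by abel)

lemma nonunit_add {a b : E} (ha : ¬ IsUnit a) (hb : ¬ IsUnit b) : ¬ IsUnit (a + b) := by
  rintro ⟨u, hu⟩
  have h1 : (↑u⁻¹ : E) * a + (↑u⁻¹ : E) * b = 1 := by
    rw [← mul_add, ← hu, Units.inv_mul]
  rcases IsLocalRing.isUnit_or_isUnit_of_add_one h1 with h | h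
  · rcases h with ⟨w, hw⟩
    exact ha ⟨u * w, by rw [Units.val_mul, hw, ← mul_assoc, Units.mul_inv, one_mul]⟩
  · rcases h with ⟨w, hw⟩
    exact hb ⟨u * w, by rw [Units.val_mul, hw, ← mul_assoc, Units.mul_inv, one_mul]⟩

lemma isUnit_of_left_inv {b x : E} (h : b * x = 1) : IsUnit x := by
  rcases unit_or_one_sub (x * b) with h1 | h2
  · rcases h1 with ⟨u, hu⟩
    have hxr : x * (b * (↑u⁻¹ : E)) = 1 := by
      rw [← mul_assoc, ← hu, Units.mul_inv]
    have hc : b * (↑u⁻¹ : E) = b := by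
      have : b * (x * (b * (↑u⁻¹ : E))) = b := by rw [hxr, mul_one]
      calc b * (↑u⁻¹ : E) = (b * x) * (b * (↑u⁻¹ : E)) := by rw [h, one_mul]
        _ = b := by rw [mul_assoc, this]
    rw [hc] at hxr
    exact ⟨⟨x, b, hxr, h⟩, rfl⟩
  · exfalso
    rcases h2 with ⟨u, hu⟩
    have h0 : (↑u : E) * x = 0 := by
      rw [hu, sub_mul, one_mul, mul_assoc, h, mul_one, sub_self]
    have hx0 : x = 0 := by
      have := congrArg (fun t => (↑u⁻¹ : E) * t) h0
      simpa [← mul_assoc, Units.inv_mul] using this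
    rw [hx0, mul_zero] at h
    exact zero_ne_one (α := E) h

lemma isUnit_of_right_inv {b x : E} (h : x * b = 1) : IsUnit x := by
  rcases unit_or_one_sub (b * x) with h1 | h2
  · rcases h1 with ⟨u, hu⟩
    have hxl : ((↑u⁻¹ : E) * b) * x = 1 := by
      rw [mul_assoc, ← hu, Units.inv_mul]
    exact isUnit_of_left_inv hxl
  · exfalso
    rcases h2 with ⟨u, hu⟩
    have h0 : x * (↑u : E) = 0 := by
      rw [hu, mul_sub, mul_one, ← mul_assoc, h, one_mul, sub_self]
    have hx0 : x = 0 := by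
      have := congrArg (fun t => t * (↑u⁻¹ : E)) h0
      simpa [mul_assoc, Units.mul_inv] using this
    rw [hx0, zero_mul] at h
    exact zero_ne_one (α := E) h

lemma mul_nonunit_left (a : E) {x : E} (h : ¬ IsUnit x) : ¬ IsUnit (a * x) := by
  rintro ⟨u, hu⟩
  refine h (isUnit_of_left_inv (b := (↑u⁻¹ : E) * a) ?_)
  rw [mul_assoc, ← hu, Units.inv_mul]

lemma mul_nonunit_right {x : E} (h : ¬ IsUnit x) (a : E) : ¬ IsUnit (x * a) := by
  rintro ⟨u, hu⟩
  refine h (isUnit_of_right_inv (b := a * (↑u⁻¹ : E)) ?_)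
  rw [← mul_assoc, ← hu, Units.mul_inv]

/-- The Jacobson radical (= set of nonunits) of a noncommutative local ring,
as a two-sided ideal. -/
def J (E : Type*) [Ring E] [IsLocalRing E] : TwoSidedIdeal E :=
  TwoSidedIdeal.mk' {x : E | ¬ IsUnit x}
    (by simpa using not_isUnit_zero)
    (fun hx hy => nonunit_add hx hy)
    (fun {x} hx => by
      intro hu
      exact hx (by simpa using hu.neg))
    (fun {a x} hx => mul_nonunit_left a hx)
    (fun {x a} hx => mul_nonunit_right hx a)

lemma mem_J {x : E} : x ∈ J E ↔ ¬ IsUnit x := by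
  unfold J
  exact TwoSidedIdeal.mem_mk' _ _ _ _ _ _ x

/-- The residue division ring of a noncommutative local ring. -/
abbrev D (E : Type*) [Ring E] [IsLocalRing E] : Type _ := (J E).ringCon.Quotient

/-- The quotient map to the residue division ring. -/
def π : E →+* D E := RingCon.mk' _

lemma π_eq {a b : E} : π a = π b ↔ ¬ IsUnit (a - b) := by
  constructor
  · intro h
    have h' : (J E).ringCon a b := Quotient.eq''.1 h
    exact mem_J.1 (((J E).rel_iff a b).1 h')
  · intro h
    exact Quotient.sound' (((J E).rel_iff a b).2 (mem_J.2 h))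

lemma π_zero_iff {a : E} : π a = 0 ↔ ¬ IsUnit a := by
  have h0 : (0 : D E) = π 0 := (map_zero π).symm
  rw [h0, π_eq, sub_zero]

lemma π_mk (a : E) : π a = Quotient.mk'' a := rfl

end LocalRing

section Nakayama

variable {E M : Type*} [Ring E] [IsLocalRing E] [AddCommGroup M] [Module E M]

/-- The submodule `J(E) • M`. -/
def jm (E M : Type*) [Ring E] [IsLocalRing E] [AddCommGroup M] [Module E M] :
    Submodule E M :=
  Submodule.span E {x : M | ∃ (j : E) (m : M), ¬ IsUnit j ∧ x = j • m}

lemma nakayama_aux (N : Submodule E M) (hj : ⊤ ≤ N ⊔ jm E M) :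
    ∀ (n : ℕ) (w : Fin n → M), ⊤ ≤ N ⊔ Submodule.span E (Set.range w) → N = ⊤ := by
  intro n
  induction n with
  | zero =>
    intro w hw
    have hsp : Submodule.span E (Set.range w) = ⊥ := by
      rw [Set.range_eq_empty, Submodule.span_empty]
    rw [hsp, sup_bot_eq] at hw
    exact le_antisymm le_top hw
  | succ n ih =>
    intro w hw
    -- the submodule of elements of the form `p + ∑ aᵢ • wᵢ` with `p ∈ N`, `aᵢ` nonunits
    let S : Submodule E M :=
      { carrier := {m | ∃ p ∈ N, ∃ a : Fin (n+1) → E,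
          (∀ i, ¬ IsUnit (a i)) ∧ m = p + ∑ i, a i • w i}
        zero_mem' := ⟨0, N.zero_mem, 0, fun i => by simpa using not_isUnit_zero, by simp⟩
        add_mem' := by
          rintro m₁ m₂ ⟨p₁, hp₁, a₁, ha₁, rfl⟩ ⟨p₂, hp₂, a₂, ha₂, rfl⟩
          refine ⟨p₁ + p₂, N.add_mem hp₁ hp₂, a₁ + a₂,
            fun i => nonunit_add (ha₁ i) (ha₂ i), ?_⟩
          simp only [Pi.add_apply, add_smul]
          rw [Finset.sum_add_distrib]
          abel
        smul_mem' := by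
          rintro f m ⟨p, hp, a, ha, rfl⟩
          refine ⟨f • p, N.smul_mem f hp, fun i => f * a i,
            fun i => mul_nonunit_left f (ha i), ?_⟩
          rw [smul_add, Finset.smul_sum]
          simp [mul_smul] }
    have hNS : N ≤ S := fun p hp =>
      ⟨p, hp, 0, fun i => by simpa using not_isUnit_zero, by simp⟩
    have hjmS : jm E M ≤ S := by
      rw [jm, Submodule.span_le]
      rintro _ ⟨j, m, hjn, rfl⟩
      have hm : m ∈ N ⊔ Submodule.span E (Set.range w) := hw trivial
      rcases Submodule.mem_sup.1 hm with ⟨p, hp, q, hq, rfl⟩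
      rcases (Submodule.mem_span_range_iff_exists_fun E).1 hq with ⟨c, rfl⟩
      refine ⟨j • p, N.smul_mem j hp, fun i => j * c i,
        fun i => mul_nonunit_right hjn (c i), ?_⟩
      rw [smul_add, Finset.smul_sum]
      simp [mul_smul]
    have hwS : w (Fin.last n) ∈ S := by
      have : w (Fin.last n) ∈ N ⊔ jm E M := hj trivial
      exact (sup_le hNS hjmS) this
    rcases hwS with ⟨p, hp, a, ha, heq⟩
    rw [Fin.sum_univ_castSucc] at heq
    -- isolate the last term
    have heq2 : (1 - a (Fin.last n)) • w (Fin.last n) =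
        p + ∑ i : Fin n, a i.castSucc • w i.castSucc := by
      rw [sub_smul, one_smul]
      nth_rewrite 1 [heq]
      abel
    have hu : IsUnit (1 - a (Fin.last n)) :=
      (unit_or_one_sub (a (Fin.last n))).resolve_left (ha (Fin.last n))
    rcases hu with ⟨u, hu⟩
    set N' := N ⊔ Submodule.span E (Set.range (w ∘ Fin.castSucc)) with hN'
    have hlast : w (Fin.last n) ∈ N' := by
      have hmem : (1 - a (Fin.last n)) • w (Fin.last n) ∈ N' := by
        rw [heq2]
        refine Submodule.add_mem _ (Submodule.mem_sup_left hp) ?_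
        refine Submodule.sum_mem _ (fun i _ => ?_)
        exact Submodule.mem_sup_right
          (Submodule.smul_mem _ _ (Submodule.subset_span ⟨i, rfl⟩))
      have hwl : w (Fin.last n) = (↑u⁻¹ : E) • ((1 - a (Fin.last n)) • w (Fin.last n)) := by
        rw [← hu, ← mul_smul, Units.inv_mul, one_smul]
      rw [hwl]
      exact Submodule.smul_mem _ _ hmem
    refine ih (w ∘ Fin.castSucc) ?_
    have hspan : Submodule.span E (Set.range w) ≤ N' := by
      rw [Submodule.span_le]
      rintro _ ⟨i, rfl⟩
      rcases Fin.lastCases (motive := fun i => w i ∈ N') hlast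
        (fun j => Submodule.mem_sup_right (Submodule.subset_span ⟨j, rfl⟩)) i with h
      exact h
    calc (⊤ : Submodule E M) ≤ N ⊔ Submodule.span E (Set.range w) := hw
      _ ≤ N ⊔ N' := sup_le_sup_left hspan N
      _ = N' := by rw [hN', ← sup_assoc, sup_idem]

lemma nakayama [Module.Finite E M] (N : Submodule E M) (hj : ⊤ ≤ N ⊔ jm E M) : N = ⊤ := by
  obtain ⟨n, w, hw⟩ := Module.Finite.exists_fin (R := E) (M := M)
  exact nakayama_aux N hj n w (by rw [hw]; exact le_sup_right)

/-- Coordinate functional at index `i₀` of a minimal generating set,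
valued in the residue division ring. -/
lemma exists_delta [Module.Finite E M] {k : ℕ} (v : Fin (k+1) → M)
    (hgen : Submodule.span E (Set.range v) = ⊤)
    (hmin : ∀ u : Fin k → M, Submodule.span E (Set.range u) ≠ ⊤)
    (i₀ : Fin (k+1)) :
    ∃ δ : M → D E, (∀ m m', δ (m + m') = δ m + δ m') ∧
      (∀ (f : E) (m : M), δ (f • m) = π f * δ m) ∧
      δ (v i₀) = 1 ∧ ∀ i, i ≠ i₀ → δ (v i) = 0 := by
  classical
  set N₀ : Submodule E M :=
    Submodule.span E (Set.range (v ∘ i₀.succAbove)) ⊔ jm E M with hN₀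
  -- key injectivity ingredient via Nakayama and minimality
  have hkey : ∀ a : E, a • v i₀ ∈ N₀ → ¬ IsUnit a := by
    intro a ha hu
    have hv0 : v i₀ ∈ N₀ := by
      rcases hu with ⟨u, rfl⟩
      have h2 := N₀.smul_mem (↑u⁻¹ : E) ha
      rwa [← mul_smul, Units.inv_mul, one_smul] at h2
    have htop : (⊤ : Submodule E M) ≤
        Submodule.span E (Set.range (v ∘ i₀.succAbove)) ⊔ jm E M := by
      rw [← hgen]
      rw [Submodule.span_le]
      rintro _ ⟨i, rfl⟩
      by_cases hi : i = i₀
      · subst hi; exact hv0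
      · obtain ⟨j, rfl⟩ := Fin.exists_succAbove_eq hi
        exact Submodule.mem_sup_left (Submodule.subset_span ⟨j, rfl⟩)
    exact hmin (v ∘ i₀.succAbove) (nakayama _ htop)
  let q : M → M ⧸ N₀ := Submodule.Quotient.mk
  have hq_sub : ∀ m m' : M, m - m' ∈ N₀ → q m = q m' := fun m m' h =>
    (Submodule.Quotient.eq _).2 h
  -- the evaluation map `D E → M ⧸ N₀`
  let e : D E → M ⧸ N₀ := fun d => Quotient.liftOn' d (fun a => q (a • v i₀)) (by
    intro a b hab
    have hnon : ¬ IsUnit (a - b) := mem_J.1 (((J E).rel_iff a b).1 hab)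
    refine hq_sub _ _ ?_
    rw [← sub_smul]
    exact Submodule.mem_sup_right (Submodule.subset_span ⟨a - b, v i₀, hnon, rfl⟩))
  have he_mk : ∀ a : E, e (π a) = q (a • v i₀) := fun a => rfl
  have he_inj : Function.Injective e := by
    intro d d'
    refine Quotient.inductionOn₂' d d' (fun a b h => ?_)
    have h' : q (a • v i₀) = q (b • v i₀) := h
    have hmem : a • v i₀ - b • v i₀ ∈ N₀ := (Submodule.Quotient.eq _).1 h'
    rw [← sub_smul] at hmem
    have : ¬ IsUnit (a - b) := hkey _ hmem
    exact Quotient.sound' (((J E).rel_iff a b).2 (mem_J.2 this))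
  have he_surj : Function.Surjective e := by
    intro md
    obtain ⟨m, rfl⟩ := Submodule.Quotient.mk_surjective N₀ md
    have hm : m ∈ Submodule.span E (Set.range v) := by rw [hgen]; trivial
    obtain ⟨c, hc⟩ := (Submodule.mem_span_range_iff_exists_fun E).1 hm
    refine ⟨π (c i₀), ?_⟩
    rw [he_mk]
    refine hq_sub _ _ ?_
    have hsum : m - c i₀ • v i₀ = ∑ i ∈ Finset.univ.erase i₀, c i • v i := by
      rw [Finset.sum_erase_eq_sub (Finset.mem_univ i₀), ← hc]
    have hmem : m - c i₀ • v i₀ ∈ N₀ := by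
      rw [hsum]
      refine Submodule.sum_mem _ (fun i hi => ?_)
      have hi' : i ≠ i₀ := Finset.ne_of_mem_erase hi
      obtain ⟨j, rfl⟩ := Fin.exists_succAbove_eq hi'
      exact Submodule.mem_sup_left
        (Submodule.smul_mem _ _ (Submodule.subset_span ⟨j, rfl⟩))
    have := N₀.neg_mem hmem
    rwa [neg_sub] at this
  let eq : D E ≃ M ⧸ N₀ := Equiv.ofBijective e ⟨he_inj, he_surj⟩
  refine ⟨fun m => eq.symm (q m), ?_, ?_, ?_, ?_⟩ <;> try skip
  case _ =>
    -- additivity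
    intro m m'
    apply he_inj
    have happ : ∀ z : M ⧸ N₀, e (eq.symm z) = z := fun z => eq.apply_symm_apply z
    have he_add : ∀ d d' : D E, e (d + d') = e d + e d' := by
      intro d d'
      refine Quotient.inductionOn₂' d d' (fun a b => ?_)
      show e (π (a + b)) = e (π a) + e (π b)
      rw [he_mk, he_mk, he_mk, add_smul]
      exact Submodule.Quotient.mk_add _
    rw [he_add, happ, happ, happ]
    exact Submodule.Quotient.mk_add _
  case _ =>
    intro f m
    apply he_inj
    have happ : ∀ z : M ⧸ N₀, e (eq.symm z) = z := fun z => eq.apply_symm_apply z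
    have he_smul : ∀ (f : E) (d : D E), e (π f * d) = f • e d := by
      intro f d
      refine Quotient.inductionOn' d (fun a => ?_)
      show e (π (f * a)) = f • e (π a)
      rw [he_mk, he_mk, mul_smul]
      exact Submodule.Quotient.mk_smul _ _ _
    rw [he_smul, happ, happ]
    exact Submodule.Quotient.mk_smul _ _ _
  case _ =>
    apply he_inj
    have happ : ∀ z : M ⧸ N₀, e (eq.symm z) = z := fun z => eq.apply_symm_apply z
    rw [happ]
    have : e (1 : D E) = q ((1 : E) • v i₀) := he_mk 1
    rw [this, one_smul]
  case _ =>
    intro i hi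
    apply he_inj
    have happ : ∀ z : M ⧸ N₀, e (eq.symm z) = z := fun z => eq.apply_symm_apply z
    rw [happ]
    have h0 : e (0 : D E) = q ((0 : E) • v i₀) := he_mk 0
    rw [h0, zero_smul]
    have hvi : v i ∈ N₀ := by
      obtain ⟨j, rfl⟩ := Fin.exists_succAbove_eq hi
      exact Submodule.mem_sup_left (Submodule.subset_span ⟨j, rfl⟩)
    have : q (v i) = q 0 := hq_sub _ _ (by simpa using hvi)
    rw [this]

end Nakayama

end Stmt16Aux

open Stmt16Aux

/-- Let `E` be a local (possibly noncommutative) module-finite algebra over a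
commutative Noetherian local ring `R`, with an `R`-linear anti-involution `s`,
and `M` a finitely generated left `E`-module with induced right `E`-module
structure `M_*` (`x · f = s f • x`). If `x, y` are distinct members of a minimal
generating set of `M`, which is also a minimal generating set of `M_*`, then
for any unit `r` of `R` and any `s' ∈ R`, the element `r(x ⊗ y) − s'(y ⊗ x)` is
nonzero in `M_* ⊗_E M` (encoded as the quotient of `M ⊗_R M` by the balancing
relations `(s f • m) ⊗ m' − m ⊗ (f • m')`). -/
theorem stmt_16 (R E M : Type*) [CommRing R] [IsNoetherianRing R] [IsLocalRing R]
    [Ring E] [Algebra R E] [Module.Finite R E] [IsLocalRing E]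
    [AddCommGroup M] [Module E M] [Module R M] [IsScalarTower R E M]
    [Module.Finite E M]
    (s : E →ₗ[R] E)
    (hmul : ∀ a b : E, s (a * b) = s b * s a) (hone : s 1 = 1)
    (hinv : ∀ a : E, s (s a) = a)
    (k : ℕ) (v : Fin k → M)
    -- `v` is a minimal generating set of `M` as a left `E`-module
    (hgen : Submodule.span E (Set.range v) = ⊤)
    (hmin : ∀ j : ℕ, j < k → ∀ u : Fin j → M, Submodule.span E (Set.range u) ≠ ⊤)
    -- `v` is a minimal generating set of `M_*` as a right `E`-module
    (hgen' : ∀ m : M, ∃ c : Fin k → E, m = ∑ i, s (c i) • v i)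
    (hmin' : ∀ j : ℕ, j < k → ∀ u : Fin j → M,
      ¬ (∀ m : M, ∃ c : Fin j → E, m = ∑ i, s (c i) • u i))
    (i₀ i₁ : Fin k) (hne : i₀ ≠ i₁)
    (x y : M) (hx : x = v i₀) (hy : y = v i₁)
    (r : R) (hr : IsUnit r) (s' : R) :
    (Submodule.Quotient.mk (r • (x ⊗ₜ[R] y) - s' • (y ⊗ₜ[R] x)) :
      (M ⊗[R] M) ⧸ (Submodule.span R
        {w : M ⊗[R] M | ∃ (f : E) (m m' : M),
          w = (s f • m) ⊗ₜ[R] m' - m ⊗ₜ[R] (f • m')})) ≠ 0 := by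
  classical
  obtain ⟨k', rfl⟩ : ∃ k', k = k' + 1 := by
    cases k with
    | zero => exact i₀.elim0
    | succ n => exact ⟨n, rfl⟩
  have hmin'' : ∀ u : Fin k' → M, Submodule.span E (Set.range u) ≠ ⊤ :=
    fun u => hmin k' (Nat.lt_succ_self k') u
  obtain ⟨δ₀, hδ₀add, hδ₀smul, hδ₀i₀, hδ₀ne⟩ := exists_delta v hgen hmin'' i₀
  obtain ⟨δ₁, hδ₁add, hδ₁smul, hδ₁i₁, hδ₁ne⟩ := exists_delta v hgen hmin'' i₁
  -- the anti-involution preserves units, hence descends to the residue ring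
  have hs_unit : ∀ c : E, IsUnit c → IsUnit (s c) := by
    rintro _ ⟨u, rfl⟩
    refine isUnit_of_right_inv (b := s (↑u⁻¹ : E)) ?_
    rw [← hmul, Units.inv_mul, hone]
  let sbar : D E → D E := fun d => Quotient.liftOn' d (fun a => π (s a)) (by
    intro a b hab
    have hnon : ¬ IsUnit (a - b) := mem_J.1 (((J E).rel_iff a b).1 hab)
    have hnon' : ¬ IsUnit (s a - s b) := by
      rw [← map_sub]
      intro hu
      exact hnon (by rw [← hinv (a - b)]; exact hs_unit _ hu)
    exact π_eq.2 hnon')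
  have hsbar_mk : ∀ a : E, sbar (π a) = π (s a) := fun a => rfl
  have hsbar_add : ∀ d d' : D E, sbar (d + d') = sbar d + sbar d' := by
    intro d d'
    refine Quotient.inductionOn₂' d d' (fun a b => ?_)
    show sbar (π (a + b)) = sbar (π a) + sbar (π b)
    rw [hsbar_mk, hsbar_mk, hsbar_mk, map_add, map_add]
  have hsbar_pi_mul : ∀ (a : E) (d : D E), sbar (π a * d) = sbar d * π (s a) := by
    intro a d
    refine Quotient.inductionOn' d (fun b => ?_)
    show sbar (π a * π b) = sbar (π b) * π (s a)
    rw [← map_mul, hsbar_mk, hsbar_mk, hmul, map_mul]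
  have hsbar_one : sbar 1 = 1 := by
    have : sbar (π 1) = π (s 1) := hsbar_mk 1
    rw [map_one] at this
    rw [this, hone, map_one]
  have hsbar_zero : sbar 0 = 0 := by
    have : sbar (π 0) = π (s 0) := hsbar_mk 0
    rw [map_zero] at this
    rw [this, map_zero, map_zero]
  -- the R-module structure on D E
  letI : Module R (D E) :=
    { (inferInstance : DistribMulAction R (D E)) with
      add_smul := fun t t' d => by
        refine Quotient.inductionOn' d fun a => ?_
        show π ((t + t') • a) = π (t • a) + π (t' • a)
        rw [add_smul, map_add]
      zero_smul := fun d => by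
        refine Quotient.inductionOn' d fun a => ?_
        show π ((0 : R) • a) = (0 : D E)
        rw [zero_smul, map_zero] }
  have hsmulD : ∀ (t : R) (d : D E), t • d = π (algebraMap R E t) * d := by
    intro t d
    refine Quotient.inductionOn' d fun a => ?_
    show π (t • a) = π (algebraMap R E t) * π a
    rw [Algebra.smul_def, map_mul]
  have hcen : ∀ (t : R) (d : D E), π (algebraMap R E t) * d = d * π (algebraMap R E t) := by
    intro t d
    refine Quotient.inductionOn' d (fun b => ?_)
    show π (algebraMap R E t) * π b = π b * π (algebraMap R E t)
    rw [← map_mul, ← map_mul, Algebra.commutes]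
  have halg : ∀ t : R, s (algebraMap R E t) = algebraMap R E t := by
    intro t
    rw [Algebra.algebraMap_eq_smul_one, map_smul, hone]
  have hδsmulR : ∀ (δ : M → D E), (∀ (f : E) (m : M), δ (f • m) = π f * δ m) →
      ∀ (t : R) (m : M), δ (t • m) = π (algebraMap R E t) * δ m := by
    intro δ hδ t m
    rw [← algebraMap_smul E t m, hδ]
  -- the bilinear pairing
  let B : M →ₗ[R] M →ₗ[R] D E := LinearMap.mk₂ R (fun m m' => sbar (δ₀ m) * δ₁ m')
    (fun m₁ m₂ m' => by
      show sbar (δ₀ (m₁ + m₂)) * δ₁ m' = sbar (δ₀ m₁) * δ₁ m' + sbar (δ₀ m₂) * δ₁ m'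
      rw [hδ₀add, hsbar_add, add_mul])
    (fun t m m' => by
      show sbar (δ₀ (t • m)) * δ₁ m' = t • (sbar (δ₀ m) * δ₁ m')
      rw [hδsmulR δ₀ hδ₀smul, hsbar_pi_mul, halg, hsmulD]
      rw [show sbar (δ₀ m) * π (algebraMap R E t) = π (algebraMap R E t) * sbar (δ₀ m) from
        (hcen t (sbar (δ₀ m))).symm, mul_assoc])
    (fun m m₁ m₂ => by
      show sbar (δ₀ m) * δ₁ (m₁ + m₂) = sbar (δ₀ m) * δ₁ m₁ + sbar (δ₀ m) * δ₁ m₂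
      rw [hδ₁add, mul_add])
    (fun t m m' => by
      show sbar (δ₀ m) * δ₁ (t • m') = t • (sbar (δ₀ m) * δ₁ m')
      rw [hδsmulR δ₁ hδ₁smul, hsmulD]
      rw [show sbar (δ₀ m) * (π (algebraMap R E t) * δ₁ m') =
        (sbar (δ₀ m) * π (algebraMap R E t)) * δ₁ m' from (mul_assoc _ _ _).symm]
      rw [show sbar (δ₀ m) * π (algebraMap R E t) = π (algebraMap R E t) * sbar (δ₀ m) from
        (hcen t (sbar (δ₀ m))).symm, mul_assoc])
  let φ : M ⊗[R] M →ₗ[R] D E := TensorProduct.lift B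
  have hφ_tmul : ∀ m m' : M, φ (m ⊗ₜ[R] m') = sbar (δ₀ m) * δ₁ m' := fun m m' => rfl
  intro h0
  rw [Submodule.Quotient.mk_eq_zero] at h0
  have hker : Submodule.span R
      {w : M ⊗[R] M | ∃ (f : E) (m m' : M),
        w = (s f • m) ⊗ₜ[R] m' - m ⊗ₜ[R] (f • m')} ≤ LinearMap.ker φ := by
    rw [Submodule.span_le]
    rintro w ⟨f, m, m', rfl⟩
    rw [SetLike.mem_coe, LinearMap.mem_ker, map_sub, hφ_tmul, hφ_tmul]
    rw [hδ₀smul (s f) m, hsbar_pi_mul, hinv, hδ₁smul f m', ← mul_assoc, sub_self]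
  have hz := hker h0
  rw [LinearMap.mem_ker] at hz
  have hval : φ (r • (x ⊗ₜ[R] y) - s' • (y ⊗ₜ[R] x)) = π (algebraMap R E r) := by
    rw [map_sub, φ.map_smul, φ.map_smul, hφ_tmul, hφ_tmul]
    subst hx hy
    rw [hδ₀i₀, hδ₁i₁, hδ₀ne i₁ (Ne.symm hne), hδ₁ne i₀ hne]
    have hs0 : s' • (0 : D E) = 0 := by rw [hsmulD, mul_zero]
    rw [hsbar_one, hsbar_zero, one_mul, zero_mul, hs0, sub_zero, hsmulD, mul_one]
  rw [hval] at hz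
  exact (π_zero_iff.1 hz) (hr.map (algebraMap R E))
end

section
/- Let R be a Noetherian local domain, I an ideal of R with I ≠ 0. If I ⊗_R I is a torsion-free R-module, then I is principal. -/
open TensorProduct

/-!
In a domain, torsion-freeness of `I ⊗ I` makes every pure tensor symmetric: scaling by `ab`
turns both `a ⊗ b` and `b ⊗ a` into `(ba) ⊗ (ab)`. On the other hand, two elements of `I` whose
images in the fibre `k ⊗ I` are linearly independent are separated by the bilinear form
`(x, y) ↦ f(x) g(y)` for suitable functionals `f, g`, so `a ⊗ b ≠ b ⊗ a`. Hence the fibre has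
dimension at most one, and by Nakayama `I` is generated by one element.
-/

theorem Ideal.tmul_comm_of_isTorsionFree {R : Type*} [CommRing R] [IsDomain R]
    (I : Ideal R) [Module.IsTorsionFree R (I ⊗[R] I)] (a b : I) :
    a ⊗ₜ[R] b = b ⊗ₜ[R] a := by
  rcases eq_or_ne a 0 with rfl | ha
  · simp
  rcases eq_or_ne b 0 with rfl | hb
  · simp
  have hab : (a : R) * b ≠ 0 := mul_ne_zero (by simpa using ha) (by simpa using hb)
  have hswap : (b : R) • a = (a : R) • b := Subtype.ext (mul_comm _ _)
  apply smul_right_injective (I ⊗[R] I) hab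
  calc ((a : R) * b) • a ⊗ₜ[R] b = ((b : R) • a) ⊗ₜ[R] ((a : R) • b) := by
        rw [smul_tmul_smul, mul_comm]
    _ = ((a : R) • b) ⊗ₜ[R] ((b : R) • a) := by rw [hswap]
    _ = ((a : R) * b) • b ⊗ₜ[R] a := smul_tmul_smul _ _ _ _

theorem LinearIndependent.notMem_span_singleton_of_pair {K V : Type*} [Field K] [AddCommGroup V]
    [Module K V] {x y : V} (h : LinearIndependent K ![x, y]) : x ∉ K ∙ y := by
  intro hx
  obtain ⟨c, rfl⟩ := Submodule.mem_span_singleton.mp hx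
  simpa using LinearIndependent.pair_iff.mp h (-1) c (by simp)

theorem TensorProduct.tmul_ne_tmul_swap_of_linearIndependent {R K M : Type*} [CommRing R]
    [Field K] [Algebra R K] [AddCommGroup M] [Module R M] {a b : M}
    (h : LinearIndependent K ![(1 : K) ⊗ₜ[R] a, (1 : K) ⊗ₜ[R] b]) :
    a ⊗ₜ[R] b ≠ b ⊗ₜ[R] a := by
  obtain ⟨f, hfa, hfb⟩ := Submodule.exists_dual_map_eq_bot_of_notMem
    h.notMem_span_singleton_of_pair inferInstance
  obtain ⟨g, hgb, hga⟩ := Submodule.exists_dual_map_eq_bot_of_notMem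
    (LinearIndependent.pair_symm_iff.mp h).notMem_span_singleton_of_pair inferInstance
  let F := f.restrictScalars R ∘ₗ TensorProduct.mk R K M 1
  let G := g.restrictScalars R ∘ₗ TensorProduct.mk R K M 1
  let φ : M ⊗[R] M →ₗ[R] K := TensorProduct.lift ((LinearMap.mul R K).compl₁₂ F G)
  have hfb' : f (1 ⊗ₜ b) = 0 := by simpa [Submodule.map_span] using hfb
  have hga' : g (1 ⊗ₜ a) = 0 := by simpa [Submodule.map_span] using hga
  intro hab
  have := congrArg φ hab
  simp only [φ, F, G, lift.tmul, LinearMap.compl₁₂_apply, LinearMap.mul_apply',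
    LinearMap.comp_apply, LinearMap.coe_restrictScalars, mk_apply, hfb', hga', mul_zero] at this
  exact mul_ne_zero hfa hgb this

theorem TensorProduct.finrank_le_one_of_tmul_comm {R K M : Type*} [CommRing R] [Field K]
    [Algebra R K] [AddCommGroup M] [Module R M] (hK : Function.Surjective (algebraMap R K))
    (h : ∀ a b : M, a ⊗ₜ[R] b = b ⊗ₜ[R] a) : Module.finrank K (K ⊗[R] M) ≤ 1 := by
  by_contra! hlt
  have : Nontrivial (K ⊗[R] M) := Module.nontrivial_of_finrank_pos (zero_lt_one.trans hlt)
  obtain ⟨x, hx⟩ := exists_ne (0 : K ⊗[R] M)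
  obtain ⟨y, hxy⟩ := exists_linearIndependent_pair_of_one_lt_finrank hlt hx
  obtain ⟨a, rfl⟩ := TensorProduct.mk_surjective R M K hK x
  obtain ⟨b, rfl⟩ := TensorProduct.mk_surjective R M K hK y
  exact tmul_ne_tmul_swap_of_linearIndependent hxy (h a b)

theorem Submodule.isPrincipal_of_spanFinrank_le_one {R M : Type*} [CommRing R] [AddCommGroup M]
    [Module R M] {N : Submodule R M} (hN : N.FG) (h : N.spanFinrank ≤ 1) : N.IsPrincipal := by
  rcases Nat.le_one_iff_eq_zero_or_eq_one.mp h with h0 | h1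
  · rw [(Submodule.spanFinrank_eq_zero_iff_eq_bot hN).mp h0]
    exact bot_isPrincipal
  · exact ((Submodule.spanFinrank_eq_one_iff N).mp h1).1

theorem Submodule.isPrincipal_of_tmul_comm {R M : Type*} [CommRing R] [IsLocalRing R]
    [AddCommGroup M] [Module R M] {N : Submodule R M} (hN : N.FG)
    (h : ∀ a b : N, a ⊗ₜ[R] b = b ⊗ₜ[R] a) : N.IsPrincipal := by
  refine isPrincipal_of_spanFinrank_le_one hN ?_
  rw [← TensorProduct.spanFinrank_top_eq_of_residueField N hN,
    ← Module.finrank_eq_spanFinrank_of_free]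
  exact TensorProduct.finrank_le_one_of_tmul_comm IsLocalRing.residue_surjective h

theorem stmt_17_general (R : Type*) [CommRing R] [IsDomain R] [IsNoetherianRing R]
    [IsLocalRing R] (I : Ideal R)
    (htf : NoZeroSMulDivisors R (I ⊗[R] I)) :
    I.IsPrincipal :=
  Submodule.isPrincipal_of_tmul_comm (IsNoetherian.noetherian I) I.tmul_comm_of_isTorsionFree

/-- Let `R` be a Noetherian local domain and `I` a nonzero ideal. If `I ⊗_R I`
is a torsion-free `R`-module, then `I` is principal. -/
theorem stmt_17 (R : Type*) [CommRing R] [IsDomain R] [IsNoetherianRing R]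
    [IsLocalRing R] (I : Ideal R) (hI : I ≠ ⊥)
    (htf : NoZeroSMulDivisors R (I ⊗[R] I)) :
    I.IsPrincipal :=
  stmt_17_general R I htf
end

section
/- Let R be a Noetherian local domain with total quotient ring Q, I a nonzero ideal. The natural ring map R → End_R(I) is injective, End_R(I) is commutative, and the induced surjection I ⊗_R I → I ⊗_{End_R(I)} I has torsion kernel; consequently, if I ⊗_R I is torsion-free, then I ⊗_R I ≅ I ⊗_{End_R(I)} I. -/
open TensorProduct

/-! Fix `0 ≠ a ∈ I`. Every `R`-linear `f : I → I` satisfies `a • f x = f a • x`, so `f` is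
multiplication by the fraction `f a / a`. This makes `R → End_R(I)` injective and `End_R(I)`
commutative, and it shows that `a` kills every balancing relation `f x ⊗ y - x ⊗ f y`, since
`a • (f x ⊗ y) = f a • (x ⊗ y) = a • (x ⊗ f y)`. -/

namespace Ideal

variable {R : Type*} [CommRing R] (I : Ideal R)

/-- The kernel of the surjection `I ⊗[R] I → I ⊗[End_R(I)] I`. -/
def balancingSubmodule : Submodule R (I ⊗[R] I) :=
  Submodule.span R {w | ∃ (f : Module.End R I) (x y : I), w = f x ⊗ₜ[R] y - x ⊗ₜ[R] f y}

variable {I}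

theorem coe_smul_end_apply (f : Module.End R I) (a x : I) :
    (a : R) • f x = (f a : R) • x := by
  have hax : (a : R) • x = (x : R) • a := Subtype.ext (mul_comm _ _)
  calc (a : R) • f x = f ((a : R) • x) := (map_smul f _ x).symm
    _ = (x : R) • f a := by rw [hax, map_smul]
    _ = (f a : R) • x := Subtype.ext (mul_comm _ _)

theorem coe_smul_eq_zero_of_mem_balancingSubmodule (a : I) {z : I ⊗[R] I}
    (hz : z ∈ I.balancingSubmodule) : (a : R) • z = 0 := by
  induction hz using Submodule.span_induction with
  | mem w hw =>
    obtain ⟨f, x, y, rfl⟩ := hw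
    rw [smul_sub, smul_tmul', coe_smul_end_apply, ← tmul_smul, coe_smul_end_apply, smul_tmul,
      sub_self]
  | zero => exact smul_zero _
  | add u v _ _ hu hv => rw [smul_add, hu, hv, add_zero]
  | smul r u _ hu => rw [smul_comm, hu, smul_zero]

variable [IsDomain R]

theorem algebraMap_end_injective (hI : I ≠ ⊥) :
    Function.Injective (algebraMap R (Module.End R I)) := by
  obtain ⟨a, haI, ha0⟩ := Submodule.exists_mem_ne_zero_of_ne_bot hI
  intro r s hrs
  have h : r * a = s * a := congrArg Subtype.val (LinearMap.congr_fun hrs ⟨a, haI⟩)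
  exact mul_right_cancel₀ ha0 h

theorem end_mul_comm (f g : Module.End R I) : f * g = g * f := by
  by_cases hI : I = ⊥
  · subst hI
    exact Subsingleton.elim _ _
  obtain ⟨a, haI, ha0⟩ := Submodule.exists_mem_ne_zero_of_ne_bot hI
  set α : I := ⟨a, haI⟩
  have hcomp : ∀ (f g : Module.End R I) (x : I), a • a • f (g x) = ((f α : R) * g α) • x := by
    intro f g x
    rw [coe_smul_end_apply f α, smul_comm, coe_smul_end_apply g α, smul_smul]
  ext x
  refine congrArg Subtype.val (smul_right_injective I (mul_ne_zero ha0 ha0) ?_)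
  simp only [Module.End.mul_apply, mul_smul]
  rw [hcomp f g, hcomp g f, mul_comm]

end Ideal

theorem stmt_18_general (R : Type*) [CommRing R] [IsDomain R]
    (I : Ideal R) (hI : I ≠ ⊥) :
    Function.Injective (algebraMap R (Module.End R I)) ∧
    (∀ f g : Module.End R I, f * g = g * f) ∧
    (∀ z ∈ Submodule.span R
        {w : I ⊗[R] I | ∃ (f : Module.End R I) (x y : I),
          w = (f x) ⊗ₜ[R] y - x ⊗ₜ[R] (f y)},
      ∃ r : R, r ≠ 0 ∧ r • z = 0) ∧
    (NoZeroSMulDivisors R (I ⊗[R] I) →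
      Submodule.span R
        {w : I ⊗[R] I | ∃ (f : Module.End R I) (x y : I),
          w = (f x) ⊗ₜ[R] y - x ⊗ₜ[R] (f y)} = ⊥) := by
  obtain ⟨a, haI, ha0⟩ := Submodule.exists_mem_ne_zero_of_ne_bot hI
  have hkill : ∀ z ∈ I.balancingSubmodule, a • z = 0 := fun z hz =>
    Ideal.coe_smul_eq_zero_of_mem_balancingSubmodule ⟨a, haI⟩ hz
  refine ⟨Ideal.algebraMap_end_injective hI, Ideal.end_mul_comm,
    fun z hz => ⟨a, ha0, hkill z hz⟩, fun _ => ?_⟩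
  exact (Submodule.eq_bot_iff _).2 fun z hz => (smul_eq_zero.1 (hkill z hz)).resolve_left ha0

/-- Let `R` be a Noetherian local domain and `I` a nonzero ideal. Then the
natural ring map `R → End_R(I)` is injective, `End_R(I)` is commutative, the
kernel of the natural surjection `I ⊗_R I → I ⊗_{End_R(I)} I` (the submodule of
balancing relations) is torsion; consequently if `I ⊗_R I` is torsion-free this
submodule vanishes and the surjection is an isomorphism. -/
theorem stmt_18 (R : Type*) [CommRing R] [IsDomain R] [IsNoetherianRing R]
    [IsLocalRing R] (I : Ideal R) (hI : I ≠ ⊥) :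
    Function.Injective (algebraMap R (Module.End R I)) ∧
    (∀ f g : Module.End R I, f * g = g * f) ∧
    (∀ z ∈ Submodule.span R
        {w : I ⊗[R] I | ∃ (f : Module.End R I) (x y : I),
          w = (f x) ⊗ₜ[R] y - x ⊗ₜ[R] (f y)},
      ∃ r : R, r ≠ 0 ∧ r • z = 0) ∧
    (NoZeroSMulDivisors R (I ⊗[R] I) →
      Submodule.span R
        {w : I ⊗[R] I | ∃ (f : Module.End R I) (x y : I),
          w = (f x) ⊗ₜ[R] y - x ⊗ₜ[R] (f y)} = ⊥) :=
  stmt_18_general R I hI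
end

section
/- Let R be a commutative Noetherian local domain with total quotient ring Q, M a finitely generated torsion-free R-module of constant rank n whose endomorphism ring E = End_R(M) carries an R*-algebra structure. After localizing at all nonzero elements, the involution on E ⊗_R Q ≅ M_n(Q) is given by A* = C⁻¹A^TC with C^T = aC, a = ±1 (since Q is a field and a² = 1). Then the submodule T of M_* ⊗_E M generated by all elements x ⊗ y − a(y ⊗ x) is a torsion R-module. -/
/-!
Write `Q = FractionRing R` and `P = M_* ⊗_E M`. Since `Q ⊗_R P` is the localization of `P` at the
nonzero elements, it suffices to see that the generators `x ⊗ y - a (y ⊗ x)` vanish in `Q ⊗_R P`.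
That module receives a map from `(Q ⊗ M) ⊗_Q (Q ⊗ M)` killing `A* u ⊗ v - u ⊗ A v` for base
changes `A` of endomorphisms of `M`; as `M` is finitely presented, every `Q`-endomorphism of
`Q ⊗ M` is such a base change up to a unit, so the relation holds for all `A ∈ M_n(Q)`. Taking `A`
of rank one gives `u ⊗ v ≡ (vᵀ C u) (w ⊗ e)` for fixed `w, e`, and `Cᵀ = a C` then yields
`u ⊗ v ≡ a (v ⊗ u)`.
-/

open Matrix TensorProduct
open scoped nonZeroDivisors

theorem Matrix.mul_transpose_vecMulVec_mul {K l m n : Type*} [CommRing K] [Fintype m]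
    [Fintype n] (D : Matrix l n K) (x : m → K) (y : n → K) (C : Matrix m l K) :
    D * (vecMulVec x y)ᵀ * C = vecMulVec (D *ᵥ y) (x ᵥ* C) := by
  rw [transpose_vecMulVec, mul_vecMulVec, vecMulVec_mul]

section TransposeAdjoint

variable {K V W ι κ : Type*} [CommRing K] [AddCommGroup V] [Module K V] [AddCommGroup W]
  [Module K W] [Fintype ι] [DecidableEq ι] [Fintype κ]

theorem Matrix.toLin_vecMulVec_apply (b : Module.Basis ι K V) (b' : Module.Basis κ K W)
    (x : κ → K) (y : ι → K) (u : V) :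
    toLin b b' (vecMulVec x y) u = (y ⬝ᵥ b.repr u) • b'.equivFun.symm x := by
  rw [← b'.equivFun.symm_apply_apply (toLin b b' _ u), ← map_smul]
  congr 1
  ext k
  simp [Matrix.repr_toLin, vecMulVec_mulVec, mul_comm]

/-- The paper's `A* = C⁻¹ Aᵀ C`, transported to `End V` through `b`. -/
noncomputable def transposeAdjoint (b : Module.Basis ι K V) (C : Matrix ι ι K) [Invertible C]
    (g : V →ₗ[K] V) : V →ₗ[K] V :=
  toLin b b (⅟C * (LinearMap.toMatrix b b g)ᵀ * C)

variable (b : Module.Basis ι K V) (C : Matrix ι ι K) [Invertible C]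

theorem transposeAdjoint_toLin_vecMulVec_apply (x y : ι → K) (u : V) :
    transposeAdjoint b C (toLin b b (vecMulVec x y)) u =
      ((x ᵥ* C) ⬝ᵥ b.repr u) • b.equivFun.symm (⅟C *ᵥ y) := by
  rw [transposeAdjoint, LinearMap.toMatrix_toLin, mul_transpose_vecMulVec_mul,
    toLin_vecMulVec_apply]

theorem transposeAdjoint_smul (c : K) (g : V →ₗ[K] V) :
    transposeAdjoint b C (c • g) = c • transposeAdjoint b C g := by
  rw [transposeAdjoint, transposeAdjoint, map_smul, transpose_smul, Matrix.mul_smul,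
    Matrix.smul_mul, map_smul]

theorem tmul_sub_smul_tmul_comm_mem {a : K} (hC : Cᵀ = a • C) {Rel : Submodule K (V ⊗[K] V)}
    (hRel : ∀ g u v, transposeAdjoint b C g u ⊗ₜ v - u ⊗ₜ g v ∈ Rel) (u v : V) :
    u ⊗ₜ v - a • (v ⊗ₜ u) ∈ Rel := by
  rcases subsingleton_or_nontrivial V with hV | hV
  · simp [Subsingleton.elim u 0]
  obtain ⟨i⟩ := b.index_nonempty
  set w := b.equivFun.symm (⅟C *ᵥ Pi.single i 1)
  -- the relation for the rank-one map `x ↦ (b.repr x i) • v`, evaluated at `u ⊗ b i`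
  have hpure : ∀ u v, (((b.repr v ᵥ* C) ⬝ᵥ b.repr u) • w) ⊗ₜ b i - u ⊗ₜ v ∈ Rel := by
    intro u v
    have := hRel (toLin b b (vecMulVec (b.repr v) (Pi.single i 1))) u (b i)
    rw [transposeAdjoint_toLin_vecMulVec_apply, toLin_vecMulVec_apply] at this
    simpa [w] using this
  have hβ : (b.repr v ᵥ* C) ⬝ᵥ b.repr u = a * ((b.repr u ᵥ* C) ⬝ᵥ b.repr v) := by
    calc (b.repr v ᵥ* C) ⬝ᵥ b.repr u = (b.repr u ᵥ* Cᵀ) ⬝ᵥ b.repr v := by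
          rw [vecMul_transpose, ← dotProduct_mulVec]
          exact dotProduct_comm _ _
      _ = a * ((b.repr u ᵥ* C) ⬝ᵥ b.repr v) := by
          rw [hC, vecMul_smul, smul_dotProduct, smul_eq_mul]
  convert Rel.sub_mem (Rel.smul_mem a (hpure v u)) (hpure u v) using 1
  simp only [hβ, smul_sub, smul_tmul', smul_smul]
  abel

end TransposeAdjoint

section Localization

variable {R : Type*} [CommRing R] {A : Type*} [CommRing A] [Algebra R A] {M N : Type*}
  [AddCommGroup M] [Module R M] [AddCommGroup N] [Module R N] [Module.FinitePresentation R M]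

theorem LinearMap.exists_baseChange_eq_smul (S : Submonoid R) [IsLocalization S A]
    (g : A ⊗[R] M →ₗ[A] A ⊗[R] N) :
    ∃ (f : M →ₗ[R] N) (s : S), f.baseChange A = algebraMap R A s • g := by
  have := IsLocalization.flat A S
  have : IsLocalizedModule S (baseChangeHom R A M N) :=
    (isLocalizedModule_iff_isBaseChange S A _).2
      (Module.FinitePresentation.isBaseChange_map R M N A)
  obtain ⟨⟨f, s⟩, hs⟩ := IsLocalizedModule.surj S (baseChangeHom R A M N) g
  exact ⟨f, s, by rw [algebraMap_smul]; exact hs.symm⟩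

variable {ι : Type*} [Fintype ι] [DecidableEq ι] (b : Module.Basis ι A (A ⊗[R] M))
  (C : Matrix ι ι A) [Invertible C]

theorem transposeAdjoint_tmul_sub_mem_of_baseChange (S : Submonoid R) [IsLocalization S A]
    {Rel : Submodule A ((A ⊗[R] M) ⊗[A] (A ⊗[R] M))}
    (hRel : ∀ (f : Module.End R M) u v,
      transposeAdjoint b C (f.baseChange A) u ⊗ₜ v - u ⊗ₜ f.baseChange A v ∈ Rel)
    (g : A ⊗[R] M →ₗ[A] A ⊗[R] M) (u v : A ⊗[R] M) :
    transposeAdjoint b C g u ⊗ₜ v - u ⊗ₜ g v ∈ Rel := by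
  obtain ⟨f, s, hf⟩ := LinearMap.exists_baseChange_eq_smul S g
  have := hRel f u v
  rw [hf, transposeAdjoint_smul, LinearMap.smul_apply, LinearMap.smul_apply, ← smul_tmul',
    tmul_smul] at this
  rw [← Rel.smul_mem_iff_of_isUnit (IsLocalization.map_units A s), smul_sub]
  exact this

end Localization

theorem baseChange_mkQ_comp_distribBaseChange_symm_rTensor_eq {R A M N : Type*} [CommRing R]
    [CommRing A] [Algebra R A] [AddCommGroup M] [Module R M] [AddCommGroup N] [Module R N]
    {P : Submodule R (M ⊗[R] N)} {f : M →ₗ[R] M} {g : N →ₗ[R] N}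
    (hP : ∀ m n, f m ⊗ₜ n - m ⊗ₜ g n ∈ P) :
    P.mkQ.baseChange A ∘ₗ (AlgebraTensorModule.distribBaseChange R A M N).symm.toLinearMap ∘ₗ
        (f.baseChange A).rTensor (A ⊗[R] N) =
      P.mkQ.baseChange A ∘ₗ (AlgebraTensorModule.distribBaseChange R A M N).symm.toLinearMap ∘ₗ
        (g.baseChange A).lTensor (A ⊗[R] M) := by
  ext m n
  simp [(Submodule.Quotient.eq P).2 (hP m n)]

theorem stmt_19_general (R : Type*) [CommRing R] [IsDomain R] [IsNoetherianRing R]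
    (M : Type*) [AddCommGroup M] [Module R M] [Module.Finite R M]
    (st : Module.End R M → Module.End R M)
    (n : ℕ) (b : Module.Basis (Fin n) (FractionRing R) ((FractionRing R) ⊗[R] M))
    (C : Matrix (Fin n) (Fin n) (FractionRing R)) [Invertible C]
    (a : R)
    (hC : Cᵀ = (algebraMap R (FractionRing R) a) • C)
    (hmat : ∀ f : Module.End R M,
      LinearMap.toMatrix b b (LinearMap.baseChange (FractionRing R) (st f)) =
        ⅟C * (LinearMap.toMatrix b b (LinearMap.baseChange (FractionRing R) f))ᵀ * C) :
    ∀ t ∈ Submodule.span R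
        {w : (M ⊗[R] M) ⧸ (Submodule.span R
            {z : M ⊗[R] M | ∃ (f : Module.End R M) (m m' : M),
              z = (st f • m) ⊗ₜ[R] m' - m ⊗ₜ[R] (f • m')}) |
          ∃ x y : M,
            w = Submodule.Quotient.mk (x ⊗ₜ[R] y - a • (y ⊗ₜ[R] x))},
      ∃ r : R, r ≠ 0 ∧ r • t = 0 := by
  have : Module.FinitePresentation R M := Module.finitePresentation_of_finite R M
  set P := Submodule.span R {z : M ⊗[R] M | ∃ (f : Module.End R M) (m m' : M),
    z = (st f • m) ⊗ₜ[R] m' - m ⊗ₜ[R] (f • m')}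
  set θ := P.mkQ.baseChange (FractionRing R) ∘ₗ
    (AlgebraTensorModule.distribBaseChange R (FractionRing R) M M).symm.toLinearMap
  have hbase : ∀ (f : Module.End R M) u v, transposeAdjoint b C (f.baseChange _) u ⊗ₜ v -
      u ⊗ₜ f.baseChange (FractionRing R) v ∈ LinearMap.ker θ := by
    intro f u v
    have hst : transposeAdjoint b C (f.baseChange _) = (st f).baseChange (FractionRing R) := by
      rw [transposeAdjoint, ← hmat, toLin_toMatrix]
    rw [hst, LinearMap.mem_ker, map_sub, sub_eq_zero]
    exact LinearMap.congr_fun (baseChange_mkQ_comp_distribBaseChange_symm_rTensor_eq (P := P)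
      fun m m' ↦ Submodule.subset_span ⟨f, m, m', rfl⟩) (u ⊗ₜ v)
  have hswap := tmul_sub_smul_tmul_comm_mem b C hC
    (transposeAdjoint_tmul_sub_mem_of_baseChange b C R⁰ hbase)
  have hgen : ∀ x y : M,
      Submodule.Quotient.mk (p := P) (x ⊗ₜ y - a • (y ⊗ₜ x)) ∈ Submodule.torsion R _ := by
    intro x y
    refine (Submodule.mem_torsion_iff _).2 ((IsLocalizedModule.eq_zero_iff R⁰
      (TensorProduct.mk R (FractionRing R) (M ⊗[R] M ⧸ P) 1)).1 ?_)
    have h := hswap (1 ⊗ₜ x) (1 ⊗ₜ y)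
    rw [LinearMap.mem_ker, map_sub, map_smul] at h
    simpa [θ, tmul_sub, tmul_smul] using h
  intro t ht
  obtain ⟨r, hr⟩ := (Submodule.mem_torsion_iff t).1 <|
    Submodule.span_le.2 (by rintro _ ⟨x, y, rfl⟩; exact hgen x y) ht
  exact ⟨r, nonZeroDivisors.coe_ne_zero r, hr⟩

/-- Let `R` be a commutative Noetherian local domain with fraction field `Q`,
`M` a finitely generated torsion-free `R`-module of constant rank `n` (so that
`Q ⊗_R M` is free of rank `n` with basis `b`), whose endomorphism ring
`E = End_R(M)` carries an `R*`-algebra structure `st`. Suppose the induced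
involution on `E ⊗_R Q ≅ M_n(Q)` is given by `A* = C⁻¹AᵀC` with `Cᵀ = aC` and
`a = ±1`. Then the submodule `T` of `M_* ⊗_E M` (encoded as a quotient of
`M ⊗_R M` by the balancing relations) generated by the elements
`x ⊗ y − a(y ⊗ x)` is a torsion `R`-module. -/
theorem stmt_19 (R : Type*) [CommRing R] [IsDomain R] [IsNoetherianRing R]
    [IsLocalRing R] (M : Type*) [AddCommGroup M] [Module R M] [Module.Finite R M]
    (htf : NoZeroSMulDivisors R M)
    (st : Module.End R M → Module.End R M)
    (hadd : ∀ f g : Module.End R M, st (f + g) = st f + st g)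
    (hsmul : ∀ (r : R) (f : Module.End R M), st (r • f) = r • st f)
    (hmul : ∀ f g : Module.End R M, st (f * g) = st g * st f)
    (hone : st 1 = 1)
    (hinv : ∀ f : Module.End R M, st (st f) = f)
    (n : ℕ) (b : Module.Basis (Fin n) (FractionRing R) ((FractionRing R) ⊗[R] M))
    (C : Matrix (Fin n) (Fin n) (FractionRing R)) [Invertible C]
    (a : R) (ha : a = 1 ∨ a = -1)
    (hC : Cᵀ = (algebraMap R (FractionRing R) a) • C)
    (hmat : ∀ f : Module.End R M,
      LinearMap.toMatrix b b (LinearMap.baseChange (FractionRing R) (st f)) =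
        ⅟C * (LinearMap.toMatrix b b (LinearMap.baseChange (FractionRing R) f))ᵀ * C) :
    ∀ t ∈ Submodule.span R
        {w : (M ⊗[R] M) ⧸ (Submodule.span R
            {z : M ⊗[R] M | ∃ (f : Module.End R M) (m m' : M),
              z = (st f • m) ⊗ₜ[R] m' - m ⊗ₜ[R] (f • m')}) |
          ∃ x y : M,
            w = Submodule.Quotient.mk (x ⊗ₜ[R] y - a • (y ⊗ₜ[R] x))},
      ∃ r : R, r ≠ 0 ∧ r • t = 0 :=
  stmt_19_general R M st n b C a hC hmat
end
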